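/- Let d ≥ 2, let F : ℝ^{d−1} → ℝ be Lipschitz, and let K ⊂ ℝ^{d−1} be compact. Then there exists a constant C such that for every continuously differentiable compactly supported function u : ℝ^d → ℂ, ∫_K |u(x', F(x'))|² dx' ≤ C ‖u‖_{L²(ℝ^d)} ( ‖u‖²_{L²(ℝ^d)} + ‖∇u‖²_{L²(ℝ^d)} )^{1/2}. (This is the trace inequality ‖u‖²_{L²(Γ)} ≤ C ‖u‖_{L²} ‖u‖_{H¹} used in Section 2 to show that the quadratic form Q_{V,Γ} is bounded below and defines a self-adjoint operator.) -/

import Mathlib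

/-!
On every vertical line, `|u(x', a)|² = ∫_{-∞}^a ∂ₜ|u(x', t)|² dt ≤ 2 ∫_ℝ |u| |∂ₜu| dt`, whatever
the height `a`. Taking `a = F(x')`, integrating in `x'` and using Fubini gives
`∫_K |u(x', F(x'))|² dx' ≤ 2 ∫ |u| |∇u|`, and Cauchy–Schwarz bounds this by
`2 ‖u‖_{L²} ‖∇u‖_{L²} ≤ 2 ‖u‖_{L²} ‖u‖_{H¹}`.
-/

open MeasureTheory Metric

noncomputable section

/-- Embed `(x', s) ∈ ℝ^{n} × ℝ` as a point of `ℝ^{n+1}`. -/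
def snocE {n : ℕ} (x : EuclideanSpace ℝ (Fin n)) (s : ℝ) : EuclideanSpace ℝ (Fin (n + 1)) :=
  (EuclideanSpace.equiv (Fin (n + 1)) ℝ).symm
    (Fin.snoc (EuclideanSpace.equiv (Fin n) ℝ x) s)

section CauchySchwarz

variable {α E F : Type*} [MeasurableSpace α] {μ : Measure α}
  [NormedAddCommGroup E] [NormedAddCommGroup F]

theorem integral_norm_mul_norm_le_sqrt_mul_sqrt {f : α → E} {g : α → F}
    (hf : MemLp f 2 μ) (hg : MemLp g 2 μ) :
    ∫ a, ‖f a‖ * ‖g a‖ ∂μ ≤ √(∫ a, ‖f a‖ ^ 2 ∂μ) * √(∫ a, ‖g a‖ ^ 2 ∂μ) := by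
  have := integral_mul_norm_le_Lp_mul_Lq (f := fun a => ‖f a‖) (g := fun a => ‖g a‖)
    Real.HolderConjugate.two_two (by simpa using hf.norm) (by simpa using hg.norm)
  simpa [Real.sqrt_eq_rpow] using this

end CauchySchwarz

theorem norm_le_integral_norm_deriv_of_hasCompactSupport {E : Type*} [NormedAddCommGroup E]
    [NormedSpace ℝ E] [CompleteSpace E] {φ : ℝ → E} (hφ : ContDiff ℝ 1 φ)
    (hs : HasCompactSupport φ) (a : ℝ) :
    ‖φ a‖ ≤ ∫ t, ‖deriv φ t‖ := by
  have hφ' : Continuous (deriv φ) := hφ.continuous_deriv le_rfl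
  obtain ⟨m, hm⟩ := hs.isCompact.bddBelow
  set N := min a (m - 1)
  have hN : φ N = 0 := image_eq_zero_of_notMem_tsupport fun h =>
    (hm h).not_gt ((min_le_right _ _).trans_lt (by linarith))
  calc ‖φ a‖ = ‖∫ t in N..a, deriv φ t‖ := by
        rw [intervalIntegral.integral_deriv_eq_sub
          (fun t _ => (hφ.differentiable one_ne_zero) t) (hφ'.intervalIntegrable _ _), hN, sub_zero]
    _ ≤ ∫ t in Set.Ioc N a, ‖deriv φ t‖ := by
        rw [← intervalIntegral.integral_of_le (min_le_left _ _)]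
        exact intervalIntegral.norm_integral_le_integral_norm (min_le_left _ _)
    _ ≤ ∫ t, ‖deriv φ t‖ :=
        setIntegral_le_integral (hφ'.norm.integrable_of_hasCompactSupport hs.deriv.norm)
          (.of_forall fun _ => norm_nonneg _)

theorem sq_norm_le_integral_norm_mul_norm_deriv {E : Type*} [NormedAddCommGroup E]
    [InnerProductSpace ℝ E] {w : ℝ → E} (hw : ContDiff ℝ 1 w) (hs : HasCompactSupport w)
    (a : ℝ) : ‖w a‖ ^ 2 ≤ ∫ t, 2 * (‖w t‖ * ‖deriv w t‖) := by
  have hw' : ∀ t, HasDerivAt w (deriv w t) t :=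
    fun t => ((hw.differentiable one_ne_zero) t).hasDerivAt
  have hderiv : deriv (‖w ·‖ ^ 2) = fun t => 2 * inner ℝ (w t) (deriv w t) :=
    funext fun t => (hw' t).norm_sq.deriv
  have hint : Integrable fun t => 2 * (‖w t‖ * ‖deriv w t‖) :=
    (continuous_const.mul (hw.continuous.norm.mul (hw.continuous_deriv le_rfl).norm))
      |>.integrable_of_hasCompactSupport (hs.norm.mul_right.mul_left)
  calc ‖w a‖ ^ 2 = ‖‖w a‖ ^ 2‖ := by rw [Real.norm_of_nonneg (by positivity)]
    _ ≤ ∫ t, ‖deriv (‖w ·‖ ^ 2) t‖ :=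
        norm_le_integral_norm_deriv_of_hasCompactSupport (hw.norm_sq ℝ)
          (hs.comp_left (g := (‖·‖ ^ 2)) (by simp)) a
    _ ≤ ∫ t, 2 * (‖w t‖ * ‖deriv w t‖) := by
        refine integral_mono_of_nonneg (.of_forall fun _ => norm_nonneg _) hint
          (.of_forall fun t => ?_)
        simp only [hderiv, norm_mul, Real.norm_ofNat]
        gcongr
        exact norm_inner_le_norm _ _

theorem sq_norm_apply_add_smul_le {E F : Type*} [NormedAddCommGroup E] [NormedSpace ℝ E]
    [NormedAddCommGroup F] [InnerProductSpace ℝ F] {u : E → F} (hu : ContDiff ℝ 1 u)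
    (hs : HasCompactSupport u) (x : E) {v : E} (hv : ‖v‖ = 1) (a : ℝ) :
    ‖u (x + a • v)‖ ^ 2 ≤ ∫ t : ℝ, 2 * (‖u (x + t • v)‖ * ‖fderiv ℝ u (x + t • v)‖) := by
  set γ : ℝ → E := fun t => x + t • v
  have hγ : Isometry γ := Isometry.of_dist_eq fun s t => by
    simp [γ, dist_eq_norm, ← sub_smul, norm_smul, hv]
  have hγ' : ∀ t, HasDerivAt γ v t := fun t =>
    one_smul ℝ v ▸ ((hasDerivAt_id' t).smul_const v).const_add x
  have hcs : HasCompactSupport (u ∘ γ) := hs.comp_isClosedEmbedding hγ.isClosedEmbedding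
  have hfc : Continuous (fderiv ℝ u) := hu.continuous_fderiv one_ne_zero
  have hint : Integrable fun t => 2 * (‖u (γ t)‖ * ‖fderiv ℝ u (γ t)‖) :=
    ((continuous_const.mul (hu.continuous.norm.mul hfc.norm)).comp hγ.continuous)
      |>.integrable_of_hasCompactSupport hcs.norm.mul_right.mul_left
  have hγc : ContDiff ℝ 1 γ := contDiff_const.add (contDiff_id.smul contDiff_const)
  refine (sq_norm_le_integral_norm_mul_norm_deriv (hu.comp hγc) hcs a).trans
    (integral_mono_of_nonneg (.of_forall fun _ => by positivity) hint (.of_forall fun t => ?_))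
  have hderiv : deriv (u ∘ γ) t = fderiv ℝ u (γ t) v :=
    ((hu.differentiable one_ne_zero (γ t)).hasFDerivAt.comp_hasDerivAt t (hγ' t)).deriv
  have hle : ‖fderiv ℝ u (γ t) v‖ ≤ ‖fderiv ℝ u (γ t)‖ := by
    simpa [hv] using (fderiv ℝ u (γ t)).le_opNorm v
  simp only [Function.comp_apply, hderiv]
  gcongr

section Snoc

variable {n : ℕ}

theorem snocE_eq_add_smul (x : EuclideanSpace ℝ (Fin n)) (s : ℝ) :
    snocE x s = snocE x 0 + s • snocE 0 1 := by
  ext i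
  refine Fin.lastCases ?_ (fun j => ?_) i <;> simp [snocE, EuclideanSpace.equiv]

theorem norm_snocE_zero_one : ‖snocE (0 : EuclideanSpace ℝ (Fin n)) 1‖ = 1 := by
  have : snocE (0 : EuclideanSpace ℝ (Fin n)) 1 = EuclideanSpace.single (Fin.last n) 1 := by
    ext i
    refine Fin.lastCases ?_ (fun j => ?_) i
    · simp [snocE]
    · simp [snocE, (Fin.castSucc_lt_last j).ne]
  simp [this]

def snocMeasurableEquiv (n : ℕ) :
    (EuclideanSpace ℝ (Fin n) × ℝ) ≃ᵐ EuclideanSpace ℝ (Fin (n + 1)) :=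
  ((MeasurableEquiv.toLp 2 (Fin n → ℝ)).symm.prodCongr (MeasurableEquiv.refl ℝ)).trans
    (MeasurableEquiv.prodComm.trans
      ((MeasurableEquiv.piFinSuccAbove (fun _ : Fin (n + 1) => ℝ) (Fin.last n)).symm.trans
        (MeasurableEquiv.toLp 2 (Fin (n + 1) → ℝ))))

@[simp]
theorem snocMeasurableEquiv_apply (p : EuclideanSpace ℝ (Fin n) × ℝ) :
    snocMeasurableEquiv n p = snocE p.1 p.2 := by
  simp only [snocMeasurableEquiv, MeasurableEquiv.trans_apply, MeasurableEquiv.prodCongr,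
    MeasurableEquiv.prodComm, MeasurableEquiv.coe_mk, Equiv.prodCongr_apply,
    Equiv.prodComm_apply, MeasurableEquiv.piFinSuccAbove_symm_apply]
  simp [snocE, Fin.insertNthEquiv, Fin.insertNth_last']
  rfl

theorem measurePreserving_snocMeasurableEquiv :
    MeasurePreserving (snocMeasurableEquiv n) (volume.prod volume) volume :=
  (EuclideanSpace.volume_preserving_symm_measurableEquiv_toLp (Fin (n + 1))).symm.comp
    ((volume_preserving_piFinSuccAbove (fun _ : Fin (n + 1) => ℝ) (Fin.last n)).symm.comp
      (Measure.measurePreserving_swap.comp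
        ((EuclideanSpace.volume_preserving_symm_measurableEquiv_toLp (Fin n)).prod
          (MeasurePreserving.id volume))))

variable {E : Type*} [NormedAddCommGroup E] {g : EuclideanSpace ℝ (Fin (n + 1)) → E}

theorem integrable_snocE_iff :
    Integrable (fun p : EuclideanSpace ℝ (Fin n) × ℝ => g (snocE p.1 p.2)) (volume.prod volume) ↔
      Integrable g := by
  simpa [Function.comp_def] using measurePreserving_snocMeasurableEquiv.integrable_comp_emb
    (snocMeasurableEquiv n).measurableEmbedding (g := g)

variable [NormedSpace ℝ E]

theorem MeasureTheory.Integrable.integral_snocE (hg : Integrable g) :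
    Integrable fun x => ∫ t, g (snocE x t) :=
  (integrable_snocE_iff.2 hg).integral_prod_left

theorem integral_integral_snocE (hg : Integrable g) :
    ∫ x, ∫ t, g (snocE x t) = ∫ x, g x := by
  rw [← integral_prod _ (integrable_snocE_iff.2 hg)]
  simpa using measurePreserving_snocMeasurableEquiv.integral_comp' g

end Snoc

theorem setIntegral_sq_norm_apply_snocE_le {n : ℕ} {E : Type*} [NormedAddCommGroup E]
    [InnerProductSpace ℝ E] {u : EuclideanSpace ℝ (Fin (n + 1)) → E} (hu : ContDiff ℝ 1 u)
    (hs : HasCompactSupport u) (F : EuclideanSpace ℝ (Fin n) → ℝ)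
    (K : Set (EuclideanSpace ℝ (Fin n))) :
    ∫ x in K, ‖u (snocE x (F x))‖ ^ 2 ≤ 2 * ∫ y, ‖u y‖ * ‖fderiv ℝ u y‖ := by
  set h := fun y => 2 * (‖u y‖ * ‖fderiv ℝ u y‖)
  have hh : Integrable h :=
    (continuous_const.mul (hu.continuous.norm.mul (hu.continuous_fderiv one_ne_zero).norm))
      |>.integrable_of_hasCompactSupport hs.norm.mul_right.mul_left
  have hslice (x : EuclideanSpace ℝ (Fin n)) : ‖u (snocE x (F x))‖ ^ 2 ≤ ∫ t, h (snocE x t) := by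
    simpa only [← snocE_eq_add_smul] using
      sq_norm_apply_add_smul_le hu hs (snocE x 0) norm_snocE_zero_one (F x)
  calc ∫ x in K, ‖u (snocE x (F x))‖ ^ 2 ≤ ∫ x in K, ∫ t, h (snocE x t) :=
        integral_mono_of_nonneg (.of_forall fun _ => by positivity)
          hh.integral_snocE.integrableOn (.of_forall hslice)
    _ ≤ ∫ x, ∫ t, h (snocE x t) :=
        setIntegral_le_integral hh.integral_snocE
          (.of_forall fun _ => integral_nonneg fun _ => by positivity)
    _ = 2 * ∫ y, ‖u y‖ * ‖fderiv ℝ u y‖ := by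
        rw [integral_integral_snocE hh, integral_const_mul]

theorem trace_inequality_graph_general
    (n : ℕ)
    (F : EuclideanSpace ℝ (Fin n) → ℝ)
    (K : Set (EuclideanSpace ℝ (Fin n))) :
    ∃ C > 0, ∀ u : EuclideanSpace ℝ (Fin (n + 1)) → ℂ,
      ContDiff ℝ 1 u → HasCompactSupport u →
      (∫ x' in K, ‖u (snocE x' (F x'))‖ ^ 2) ≤
        C * Real.sqrt (∫ x : EuclideanSpace ℝ (Fin (n + 1)), ‖u x‖ ^ 2) *
          Real.sqrt ((∫ x : EuclideanSpace ℝ (Fin (n + 1)), ‖u x‖ ^ 2) +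
            ∫ x : EuclideanSpace ℝ (Fin (n + 1)), ‖fderiv ℝ u x‖ ^ 2) := by
  refine ⟨2, two_pos, fun u hu hs => ?_⟩
  have hu₂ : MemLp u 2 := hu.continuous.memLp_of_hasCompactSupport hs
  have hdu₂ : MemLp (fderiv ℝ u) 2 :=
    (hu.continuous_fderiv one_ne_zero).memLp_of_hasCompactSupport (hs.fderiv ℝ)
  calc _ ≤ 2 * ∫ x, ‖u x‖ * ‖fderiv ℝ u x‖ := setIntegral_sq_norm_apply_snocE_le hu hs F K
    _ ≤ 2 * (√(∫ x, ‖u x‖ ^ 2) * √(∫ x, ‖fderiv ℝ u x‖ ^ 2)) := by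
        gcongr
        exact integral_norm_mul_norm_le_sqrt_mul_sqrt hu₂ hdu₂
    _ ≤ _ := by
        rw [← mul_assoc]
        gcongr
        exact le_add_of_nonneg_left (integral_nonneg fun _ => by positivity)

/-- trace inequality `‖u‖²_{L²(Γ)} ≤ C ‖u‖_{L²} ‖u‖_{H¹}` of Section 2.
For `F : ℝ^{d−1} → ℝ` Lipschitz and `K` compact there is `C` such that for every `C¹`
compactly supported `u : ℝ^d → ℂ`,
`∫_K |u(x',F(x'))|² dx' ≤ C ‖u‖_{L²} (‖u‖²_{L²} + ‖∇u‖²_{L²})^{1/2}`. -/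
theorem trace_inequality_graph
    (n : ℕ) (hn : 1 ≤ n)
    (F : EuclideanSpace ℝ (Fin n) → ℝ) (L : NNReal) (hF : LipschitzWith L F)
    (K : Set (EuclideanSpace ℝ (Fin n))) (hK : IsCompact K) :
    ∃ C > 0, ∀ u : EuclideanSpace ℝ (Fin (n + 1)) → ℂ,
      ContDiff ℝ 1 u → HasCompactSupport u →
      (∫ x' in K, ‖u (snocE x' (F x'))‖ ^ 2) ≤
        C * Real.sqrt (∫ x : EuclideanSpace ℝ (Fin (n + 1)), ‖u x‖ ^ 2) *
          Real.sqrt ((∫ x : EuclideanSpace ℝ (Fin (n + 1)), ‖u x‖ ^ 2) +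
            ∫ x : EuclideanSpace ℝ (Fin (n + 1)), ‖fderiv ℝ u x‖ ^ 2) :=
  trace_inequality_graph_general n F K

end
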